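/- arXiv:0707.3163 — 2 statements merged into one kernel-verified Lean document; each statement's English description precedes it below -/
import Mathlib

section
/- Let x > 0 and 0 < r < 1 be real numbers, and define Φ : ℂ → ℂ by Φ(z) = z + r²x²/(z − x) + r²x. Then Φ restricts to a holomorphic bijection from the domain D = {z ∈ ℂ : Im z > 0 and |z − x| > rx} onto the upper half plane ℍ = {z ∈ ℂ : Im z > 0}; moreover Φ(0) = 0 and the complex derivative of Φ at 0 equals 1 − r². -/
open Complex Set

/-!
Up to real translations, `Φ` is the Joukowsky map `J(w) = w + ρ²/w` with `ρ = r x`: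
`Φ z = J (z - x) + x + r² x`. Since `Im J(w) = Im w · (1 - ρ²/|w|²)`, the map `J` sends the
upper half plane outside the disk of radius `ρ` into the upper half plane. It is injective
there because `J u = J v` forces `(u - v)(u v - ρ²) = 0` while `|u v| > ρ²`. For surjectivity,
the two roots of `w² - ζ w + ρ² = 0` have sum `ζ`, so one of them lies in the upper half plane,
and the formula for `Im J` puts it outside the disk.
-/

noncomputable section

def joukowsky (ρ : ℝ) (w : ℂ) : ℂ := w + (ρ : ℂ) ^ 2 / w

def upperHalfPlaneOutsideBall (ρ : ℝ) : Set ℂ := {w | 0 < w.im ∧ ρ < ‖w‖}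

end

theorem joukowsky_im (ρ : ℝ) (w : ℂ) : (joukowsky ρ w).im = w.im * (1 - ρ ^ 2 / normSq w) := by
  rw [joukowsky, ← ofReal_pow, add_im, div_im, ofReal_re, ofReal_im]
  ring

theorem exists_add_eq_and_mul_eq (σ π : ℂ) : ∃ u v : ℂ, u + v = σ ∧ u * v = π := by
  obtain ⟨s, hs⟩ := IsAlgClosed.exists_pow_nat_eq (σ ^ 2 - 4 * π) two_pos
  exact ⟨(σ + s) / 2, (σ - s) / 2, by ring, by linear_combination (-1 / 4 : ℂ) * hs⟩

theorem im_joukowsky_pos_iff {ρ : ℝ} (hρ : 0 ≤ ρ) {w : ℂ} (hw : 0 < w.im) :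
    0 < (joukowsky ρ w).im ↔ ρ < ‖w‖ := by
  have hw0 : w ≠ 0 := fun h => by simp [h] at hw
  rw [joukowsky_im, mul_pos_iff_of_pos_left hw, sub_pos, div_lt_one (normSq_pos.2 hw0),
    normSq_eq_norm_sq, sq_lt_sq₀ hρ (norm_nonneg w)]

theorem mapsTo_joukowsky {ρ : ℝ} (hρ : 0 ≤ ρ) :
    MapsTo (joukowsky ρ) (upperHalfPlaneOutsideBall ρ) {z | 0 < z.im} :=
  fun _ hw => (im_joukowsky_pos_iff hρ hw.1).2 hw.2

theorem injOn_joukowsky {ρ : ℝ} (hρ : 0 ≤ ρ) : InjOn (joukowsky ρ) {w | ρ < ‖w‖} := by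
  intro u (hu : ρ < ‖u‖) v (hv : ρ < ‖v‖) huv
  have hu0 : u ≠ 0 := norm_pos_iff.1 (hρ.trans_lt hu)
  have hv0 : v ≠ 0 := norm_pos_iff.1 (hρ.trans_lt hv)
  have hfactor : (u - v) * (u * v - (ρ : ℂ) ^ 2) = 0 := by
    rw [joukowsky, joukowsky] at huv
    field_simp at huv
    linear_combination huv
  refine sub_eq_zero.1 ((mul_eq_zero.1 hfactor).resolve_right fun h => ?_)
  have hlt : ρ ^ 2 < ‖u * v‖ := by
    rw [norm_mul, sq]
    exact mul_lt_mul'' hu hv hρ hρ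
  rw [sub_eq_zero.1 h, ← ofReal_pow, norm_real, Real.norm_of_nonneg (by positivity)] at hlt
  exact hlt.false

theorem surjOn_joukowsky {ρ : ℝ} (hρ : 0 ≤ ρ) :
    SurjOn (joukowsky ρ) (upperHalfPlaneOutsideBall ρ) {z | 0 < z.im} := by
  intro ζ (hζ : 0 < ζ.im)
  obtain ⟨u, v, hsum, hprod⟩ := exists_add_eq_and_mul_eq ζ ((ρ : ℂ) ^ 2)
  wlog hu : 0 < u.im generalizing u v
  · have him : u.im + v.im = ζ.im := by rw [← add_im, hsum]
    exact this v u (by rw [add_comm, hsum]) (by rw [mul_comm, hprod]) (by linarith)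
  have hu0 : u ≠ 0 := fun h => by simp [h] at hu
  have hJ : joukowsky ρ u = ζ := by
    rw [joukowsky, ← hprod, mul_div_cancel_left₀ _ hu0, hsum]
  exact ⟨u, ⟨hu, (im_joukowsky_pos_iff hρ hu).1 (hJ ▸ hζ)⟩, hJ⟩

theorem bijOn_joukowsky {ρ : ℝ} (hρ : 0 ≤ ρ) :
    BijOn (joukowsky ρ) (upperHalfPlaneOutsideBall ρ) {z | 0 < z.im} :=
  ⟨mapsTo_joukowsky hρ, (injOn_joukowsky hρ).mono fun _ hw => hw.2, surjOn_joukowsky hρ⟩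

theorem bijOn_sub_ofReal (ρ t : ℝ) :
    BijOn (fun z : ℂ => z - t) {z | 0 < z.im ∧ ρ < ‖z - t‖} (upperHalfPlaneOutsideBall ρ) :=
  (Equiv.subRight (t : ℂ)).bijOn fun z => by simp [upperHalfPlaneOutsideBall]

theorem bijOn_add_ofReal (t : ℝ) : BijOn (fun z : ℂ => z + t) {z | 0 < z.im} {z | 0 < z.im} :=
  (Equiv.addRight (t : ℂ)).bijOn fun z => by simp

theorem hasDerivAt_add_div_sub_add (c a b : ℂ) {z : ℂ} (hz : z ≠ a) :
    HasDerivAt (fun z => z + c / (z - a) + b) (1 - c / (z - a) ^ 2) z :=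
  (((hasDerivAt_id' z).add ((hasDerivAt_const z c).div ((hasDerivAt_id' z).sub_const a)
    (sub_ne_zero.2 hz))).add_const b).congr_deriv (by ring)

theorem half_disk_removal_map_general (x r : ℝ) (hx : 0 < x) (hr0 : 0 < r) :
    DifferentiableOn ℂ
      (fun z : ℂ => z + (r : ℂ) ^ 2 * (x : ℂ) ^ 2 / (z - (x : ℂ)) + (r : ℂ) ^ 2 * (x : ℂ))
      {z : ℂ | 0 < z.im ∧ r * x < ‖z - (x : ℂ)‖} ∧
    Set.BijOn
      (fun z : ℂ => z + (r : ℂ) ^ 2 * (x : ℂ) ^ 2 / (z - (x : ℂ)) + (r : ℂ) ^ 2 * (x : ℂ))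
      {z : ℂ | 0 < z.im ∧ r * x < ‖z - (x : ℂ)‖}
      {z : ℂ | 0 < z.im} ∧
    (fun z : ℂ => z + (r : ℂ) ^ 2 * (x : ℂ) ^ 2 / (z - (x : ℂ)) + (r : ℂ) ^ 2 * (x : ℂ)) 0 = 0 ∧
    deriv
      (fun z : ℂ => z + (r : ℂ) ^ 2 * (x : ℂ) ^ 2 / (z - (x : ℂ)) + (r : ℂ) ^ 2 * (x : ℂ))
      0 = 1 - (r : ℂ) ^ 2 := by
  have hxC : (x : ℂ) ≠ 0 := ofReal_ne_zero.2 hx.ne'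
  have hΦ : (fun z : ℂ => z + (r : ℂ) ^ 2 * (x : ℂ) ^ 2 / (z - (x : ℂ)) + (r : ℂ) ^ 2 * (x : ℂ)) =
      (fun z : ℂ => z + ((x + r ^ 2 * x : ℝ) : ℂ)) ∘ joukowsky (r * x) ∘ (· - (x : ℂ)) := by
    funext z
    simp only [Function.comp, joukowsky]
    push_cast
    ring
  refine ⟨fun z hz => ?_, ?_, by field_simp; ring, ?_⟩
  · have hzx : z ≠ x := by
      rintro rfl
      simp only [sub_self, norm_zero, mem_ofPred_eq] at hz
      exact (mul_pos hr0 hx).not_gt hz.2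
    exact (hasDerivAt_add_div_sub_add _ _ _ hzx).differentiableAt.differentiableWithinAt
  · rw [hΦ]
    exact (bijOn_add_ofReal _).comp
      ((bijOn_joukowsky (mul_pos hr0 hx).le).comp (bijOn_sub_ofReal _ _))
  · rw [(hasDerivAt_add_div_sub_add _ _ _ (by simpa using hxC.symm)).deriv]
    field_simp
    ring

/-- For `x > 0` and `0 < r < 1`, the map `Φ(z) = z + r²x²/(z − x) + r²x` restricts to a
holomorphic bijection from `D = {z : Im z > 0 ∧ |z − x| > rx}` onto the upper half plane
`{z : Im z > 0}`, with `Φ(0) = 0` and `Φ'(0) = 1 − r²`. -/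
theorem half_disk_removal_map (x r : ℝ) (hx : 0 < x) (hr0 : 0 < r) (hr1 : r < 1) :
    DifferentiableOn ℂ
      (fun z : ℂ => z + (r : ℂ) ^ 2 * (x : ℂ) ^ 2 / (z - (x : ℂ)) + (r : ℂ) ^ 2 * (x : ℂ))
      {z : ℂ | 0 < z.im ∧ r * x < ‖z - (x : ℂ)‖} ∧
    Set.BijOn
      (fun z : ℂ => z + (r : ℂ) ^ 2 * (x : ℂ) ^ 2 / (z - (x : ℂ)) + (r : ℂ) ^ 2 * (x : ℂ))
      {z : ℂ | 0 < z.im ∧ r * x < ‖z - (x : ℂ)‖}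
      {z : ℂ | 0 < z.im} ∧
    (fun z : ℂ => z + (r : ℂ) ^ 2 * (x : ℂ) ^ 2 / (z - (x : ℂ)) + (r : ℂ) ^ 2 * (x : ℂ)) 0 = 0 ∧
    deriv
      (fun z : ℂ => z + (r : ℂ) ^ 2 * (x : ℂ) ^ 2 / (z - (x : ℂ)) + (r : ℂ) ^ 2 * (x : ℂ))
      0 = 1 - (r : ℂ) ^ 2 :=
  half_disk_removal_map_general x r hx hr0
end

section
/- Let a be a real number with 1/4 < a < 1/2, set c̃ₐ = Γ(2a)/(Γ(1 − 2a)·Γ(4a − 1)), let θ ∈ (0,π) and let s ∈ (0,1). Then, with all complex powers taken as principal powers, c̃ₐ·|∫₀ˢ (ρe^{iθ})^{−2a}(1 − ρe^{iθ})^{4a−2} e^{iθ} dρ| ≤ 1 − c̃ₐ·(1 − s)^{4a−1}/(4a − 1). -/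
/-!
On the ray `ζ = ρ e^{iθ}` one has `|1 - ζ| ≥ 1 - ρ`, and the exponent `4a - 2` is negative, so the
integrand has modulus at most `ρ^{-2a} (1 - ρ)^{4a-2}`. The real integral of this over `[0, s]` is
the Beta integral `B(1 - 2a, 4a - 1) = 1 / c̃ₐ` minus its tail over `[s, 1]`, and on the tail
`ρ^{-2a} ≥ 1`, so the tail is at least `∫ₛ¹ (1 - ρ)^{4a-2} dρ = (1 - s)^{4a-1} / (4a - 1)`.
-/

open Complex Real intervalIntegral MeasureTheory Set

lemma norm_one_sub_cpow_le {z : ℂ} (hz : ‖z‖ < 1) {q : ℝ} (hq : q ≤ 0) :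
    ‖(1 - z) ^ (q : ℂ)‖ ≤ (1 - ‖z‖) ^ q := by
  rw [norm_cpow_real]
  refine rpow_le_rpow_of_nonpos (by linarith) ?_ hq
  simpa using norm_sub_norm_le (1 : ℂ) z

lemma norm_ray_integrand_le (p : ℝ) {q : ℝ} (hq : q ≤ 0) (θ : ℝ) {ρ : ℝ} (hρ0 : 0 ≤ ρ)
    (hρ1 : ρ < 1) :
    ‖((ρ : ℂ) * exp (θ * I)) ^ (p : ℂ) * (1 - (ρ : ℂ) * exp (θ * I)) ^ (q : ℂ) * exp (θ * I)‖ ≤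
      ρ ^ p * (1 - ρ) ^ q := by
  have hnorm : ‖(ρ : ℂ) * exp (θ * I)‖ = ρ := by
    rw [norm_mul, norm_exp_ofReal_mul_I, mul_one, norm_real, Real.norm_of_nonneg hρ0]
  have h := norm_one_sub_cpow_le (hnorm ▸ hρ1) hq
  rw [hnorm] at h
  rw [norm_mul, norm_mul, norm_cpow_real, hnorm, norm_exp_ofReal_mul_I, mul_one]
  gcongr

section Beta

variable {p q : ℝ}

lemma intervalIntegrable_one_sub_rpow (hq : -1 < q) (s : ℝ) :
    IntervalIntegrable (fun x : ℝ => (1 - x) ^ q) volume s 1 := by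
  simpa using (intervalIntegrable_rpow' hq (a := 1 - s) (b := 0)).comp_sub_left 1

lemma integral_one_sub_rpow (hq : -1 < q) (s : ℝ) :
    ∫ x in s..1, (1 - x) ^ q = (1 - s) ^ (q + 1) / (q + 1) := by
  rw [integral_comp_sub_left (fun x => x ^ q) 1, sub_self, integral_rpow (Or.inl hq),
    zero_rpow (by linarith), sub_zero]

lemma intervalIntegrable_rpow_mul_one_sub_rpow (hp : -1 < p) (hq : -1 < q) :
    IntervalIntegrable (fun x : ℝ => x ^ p * (1 - x) ^ q) volume 0 1 := by
  have hleft : IntervalIntegrable (fun x : ℝ => x ^ p * (1 - x) ^ q) volume 0 (1 / 2) := by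
    refine (intervalIntegrable_rpow' hp).mul_continuousOn
      (ContinuousOn.rpow_const (by fun_prop) fun x hx => Or.inl ?_)
    rw [uIcc_of_le (by norm_num)] at hx
    linarith [hx.2]
  have hright : IntervalIntegrable (fun x : ℝ => x ^ p * (1 - x) ^ q) volume (1 / 2) 1 := by
    refine (intervalIntegrable_one_sub_rpow hq _).continuousOn_mul
      (ContinuousOn.rpow_const (by fun_prop) fun x hx => Or.inl ?_)
    rw [uIcc_of_le (by norm_num)] at hx
    linarith [hx.1]
  exact hleft.trans hright

lemma integral_rpow_mul_one_sub_rpow (hp : -1 < p) (hq : -1 < q) :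
    ∫ x in (0 : ℝ)..1, x ^ p * (1 - x) ^ q =
      Real.Gamma (p + 1) * Real.Gamma (q + 1) / Real.Gamma (p + q + 2) := by
  have hbeta := betaIntegral_eq_Gamma_mul_div (p + 1 : ℂ) (q + 1)
    (by simp; linarith) (by simp; linarith)
  have hcongr : betaIntegral (p + 1 : ℂ) (q + 1) =
      ((∫ x in (0 : ℝ)..1, x ^ p * (1 - x) ^ q : ℝ) : ℂ) := by
    rw [betaIntegral, ← integral_ofReal]
    refine integral_congr fun x hx => ?_
    rw [uIcc_of_le zero_le_one] at hx
    rw [ofReal_mul, ofReal_cpow hx.1, ofReal_cpow (sub_nonneg.2 hx.2)]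
    push_cast
    ring_nf
  apply ofReal_injective
  rw [← hcongr, hbeta]
  push_cast [← Gamma_ofReal]
  ring_nf

lemma one_sub_rpow_div_le_integral_rpow_mul_one_sub_rpow (hp : p ≤ 0) (hq : -1 < q) {s : ℝ}
    (hs0 : 0 < s) (hs1 : s ≤ 1) :
    (1 - s) ^ (q + 1) / (q + 1) ≤ ∫ x in s..1, x ^ p * (1 - x) ^ q := by
  rw [← integral_one_sub_rpow hq]
  have hpow : ContinuousOn (fun x : ℝ => x ^ p) (uIcc s 1) :=
    ContinuousOn.rpow_const (by fun_prop) fun x hx => Or.inl (by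
      rw [uIcc_of_le hs1] at hx
      linarith [hx.1])
  refine integral_mono_on hs1 (intervalIntegrable_one_sub_rpow hq s)
    ((intervalIntegrable_one_sub_rpow hq s).continuousOn_mul hpow) fun x hx => ?_
  have hx0 : 0 < x := hs0.trans_le hx.1
  exact le_mul_of_one_le_left (rpow_nonneg (by linarith [hx.2]) _)
    (one_le_rpow_of_pos_of_le_one_of_nonpos hx0 hx.2 hp)

end Beta

lemma norm_integral_ray_le {p q : ℝ} (hp : -1 < p) (hq : q ≤ 0) (θ : ℝ) {s : ℝ} (hs0 : 0 ≤ s)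
    (hs1 : s < 1) :
    ‖∫ ρ in (0 : ℝ)..s,
        ((ρ : ℂ) * exp (θ * I)) ^ (p : ℂ) * (1 - (ρ : ℂ) * exp (θ * I)) ^ (q : ℂ) * exp (θ * I)‖ ≤
      ∫ ρ in (0 : ℝ)..s, ρ ^ p * (1 - ρ) ^ q := by
  have hint : IntervalIntegrable (fun ρ : ℝ => ρ ^ p * (1 - ρ) ^ q) volume 0 s :=
    (intervalIntegrable_rpow' hp).mul_continuousOn
      (ContinuousOn.rpow_const (by fun_prop) fun x hx => Or.inl (by
        rw [uIcc_of_le hs0] at hx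
        linarith [hx.2]))
  exact norm_integral_le_of_norm_le hs0
    (.of_forall fun ρ hρ => norm_ray_integrand_le p hq θ hρ.1.le (hρ.2.trans_lt hs1)) hint

theorem normalized_ray_integral_bound_general (a : ℝ) (ha1 : 1 / 4 < a) (ha2 : a < 1 / 2)
    (θ : ℝ) (s : ℝ) (hs0 : 0 < s) (hs1 : s < 1) :
    Real.Gamma (2 * a) / (Real.Gamma (1 - 2 * a) * Real.Gamma (4 * a - 1)) *
        ‖(∫ ρ in (0 : ℝ)..s,
            ((ρ : ℂ) * Complex.exp (θ * Complex.I)) ^ ((-(2 * a) : ℝ) : ℂ) *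
              (1 - (ρ : ℂ) * Complex.exp (θ * Complex.I)) ^ ((4 * a - 2 : ℝ) : ℂ) *
              Complex.exp (θ * Complex.I))‖ ≤
      1 - Real.Gamma (2 * a) / (Real.Gamma (1 - 2 * a) * Real.Gamma (4 * a - 1)) *
            ((1 - s) ^ (4 * a - 1) / (4 * a - 1)) := by
  set c := Real.Gamma (2 * a) / (Real.Gamma (1 - 2 * a) * Real.Gamma (4 * a - 1))
  have hp : -1 < -(2 * a) := by linarith
  have hq : -1 < 4 * a - 2 := by linarith
  have hΓ₁ := Real.Gamma_pos_of_pos (by linarith : 0 < 2 * a)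
  have hΓ₂ := Real.Gamma_pos_of_pos (by linarith : 0 < 1 - 2 * a)
  have hΓ₃ := Real.Gamma_pos_of_pos (by linarith : 0 < 4 * a - 1)
  have hc : 0 < c := by positivity
  have hbeta : c * ∫ ρ in (0 : ℝ)..1, ρ ^ (-(2 * a)) * (1 - ρ) ^ (4 * a - 2) = 1 := by
    rw [integral_rpow_mul_one_sub_rpow hp hq, show -(2 * a) + 1 = 1 - 2 * a by ring,
      show 4 * a - 2 + 1 = 4 * a - 1 by ring, show -(2 * a) + (4 * a - 2) + 2 = 2 * a by ring,
      div_mul_div_comm, mul_comm (Real.Gamma (2 * a)), div_self (by positivity)]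
  have htail := one_sub_rpow_div_le_integral_rpow_mul_one_sub_rpow (by linarith : -(2 * a) ≤ 0)
    hq hs0 hs1.le
  rw [show 4 * a - 2 + 1 = 4 * a - 1 by ring] at htail
  have hint := intervalIntegrable_rpow_mul_one_sub_rpow hp hq
  calc _ ≤ c * ∫ ρ in (0 : ℝ)..s, ρ ^ (-(2 * a)) * (1 - ρ) ^ (4 * a - 2) :=
        mul_le_mul_of_nonneg_left (norm_integral_ray_le hp (by linarith) θ hs0.le hs1) hc.le
    _ = 1 - c * ∫ ρ in s..1, ρ ^ (-(2 * a)) * (1 - ρ) ^ (4 * a - 2) := by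
        rw [← integral_interval_sub_left hint (hint.mono_set (uIcc_subset_uIcc_left ?_)), mul_sub,
          hbeta]
        · ring
        · exact Icc_subset_uIcc ⟨hs0.le, hs1.le⟩
    _ ≤ _ := by gcongr

/-- For `1/4 < a < 1/2`, `c̃ₐ = Γ(2a)/(Γ(1 − 2a)Γ(4a − 1))`, `θ ∈ (0,π)` and `s ∈ (0,1)`,
with principal-branch complex powers,
`c̃ₐ·|∫₀ˢ (ρe^{iθ})^{−2a}(1 − ρe^{iθ})^{4a−2} e^{iθ} dρ| ≤ 1 − c̃ₐ·(1 − s)^{4a−1}/(4a − 1)`. -/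
theorem normalized_ray_integral_bound (a : ℝ) (ha1 : 1 / 4 < a) (ha2 : a < 1 / 2)
    (θ : ℝ) (hθ0 : 0 < θ) (hθπ : θ < π) (s : ℝ) (hs0 : 0 < s) (hs1 : s < 1) :
    Real.Gamma (2 * a) / (Real.Gamma (1 - 2 * a) * Real.Gamma (4 * a - 1)) *
        ‖(∫ ρ in (0 : ℝ)..s,
            ((ρ : ℂ) * Complex.exp (θ * Complex.I)) ^ ((-(2 * a) : ℝ) : ℂ) *
              (1 - (ρ : ℂ) * Complex.exp (θ * Complex.I)) ^ ((4 * a - 2 : ℝ) : ℂ) *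
              Complex.exp (θ * Complex.I))‖ ≤
      1 - Real.Gamma (2 * a) / (Real.Gamma (1 - 2 * a) * Real.Gamma (4 * a - 1)) *
            ((1 - s) ^ (4 * a - 1) / (4 * a - 1)) :=
  normalized_ray_integral_bound_general a ha1 ha2 θ s hs0 hs1
end
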